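/- arXiv:math/0512658 — 3 statements merged into one kernel-verified Lean document; each statement's English description precedes it below -/
import Mathlib

section
/- Let G be a group acting continuously on the right on a topological space M. For k ∈ G, let P_k(M) = {γ ∈ C([0,1], M) : γ(0)·k = γ(1)} with the compact-open topology. For γ ∈ P_k(M) and s ∈ ℝ define (s·γ)(t) := γ(t + s − ⌊t + s⌋)·k^{⌊t+s⌋}, where ⌊·⌋ is the floor function. Then: (i) s·γ is a continuous path lying again in P_k(M); (ii) 0·γ = γ and s·(s'·γ) = (s+s')·γ for all s, s' ∈ ℝ, so this defines an action of the additive group ℝ on P_k(M); and (iii) (1·γ)(t) = γ(t)·k for all t, i.e., 1·γ equals the pointwise translate γ_k of γ by k. -/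
/-- The space `P_k(M) = {γ ∈ C([0,1], M) : γ(0)·k = γ(1)}` with the compact-open topology. -/
abbrev PSp {M G : Type*} [TopologicalSpace M] (act : M → G → M) (k : G) : Type _ :=
  {γ : C(unitInterval, M) // act (γ 0) k = γ 1}

/-- The rotation `(s·γ)(t) := γ(t + s − ⌊t + s⌋)·k^⌊t+s⌋` (at the level of functions
`[0,1] → M`; note `t + s − ⌊t + s⌋ = Int.fract (t + s) ∈ [0,1)`). -/
noncomputable def rotFn {M G : Type*} [Group G] (act : M → G → M) (k : G) (s : ℝ)
    (γ : unitInterval → M) : unitInterval → M :=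
  fun t =>
    act (γ ⟨Int.fract ((t : ℝ) + s), Int.fract_nonneg _, (Int.fract_lt_one _).le⟩)
      (k ^ ⌊(t : ℝ) + s⌋)

/-!
Extend `γ ∈ P_k(M)` to the twisted periodic path `ext : ℝ → M` equal to `γ(x - n)·kⁿ` on
`[n, n+1]`; the condition `γ(0)·k = γ(1)` makes consecutive pieces agree at the integers, so
`ext` is continuous. Then `s·γ` is the restriction to `[0,1]` of `ext` translated by `s`, and
the algebraic claims all reduce to `ext(x + n) = ext(x)·kⁿ` for integers `n`.
-/

open Set Filter

noncomputable def fractPoint (x : ℝ) : unitInterval :=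
  ⟨Int.fract x, Int.fract_nonneg x, (Int.fract_lt_one x).le⟩

theorem fractPoint_add_intCast (x : ℝ) (n : ℤ) : fractPoint (x + n) = fractPoint x :=
  Subtype.ext (Int.fract_add_intCast x n)

section TwistedExtension

variable {M G : Type*} [Group G] (act : M → G → M) (k : G)

noncomputable def twistedExtension (γ : unitInterval → M) (x : ℝ) : M :=
  act (γ (fractPoint x)) (k ^ ⌊x⌋)

theorem rotFn_apply (s : ℝ) (γ : unitInterval → M) (t : unitInterval) :
    rotFn act k s γ t = twistedExtension act k γ (t + s) :=
  rfl

variable {act}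

theorem twistedExtension_add_intCast (hmul : ∀ x g h, act (act x g) h = act x (g * h))
    (γ : unitInterval → M) (x : ℝ) (n : ℤ) :
    twistedExtension act k γ (x + n) = act (twistedExtension act k γ x) (k ^ n) := by
  rw [twistedExtension, twistedExtension, fractPoint_add_intCast, Int.floor_add_intCast,
    zpow_add, hmul]

theorem twistedExtension_add_one (hmul : ∀ x g h, act (act x g) h = act x (g * h))
    (γ : unitInterval → M) (x : ℝ) :
    twistedExtension act k γ (x + 1) = act (twistedExtension act k γ x) k := by
  simpa using twistedExtension_add_intCast k hmul γ x 1

theorem twistedExtension_coe (hone : ∀ x, act x 1 = x) {γ : unitInterval → M}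
    (hγ : act (γ 0) k = γ 1) (t : unitInterval) :
    twistedExtension act k γ t = γ t := by
  rcases (unitInterval.le_one t).lt_or_eq with ht | ht
  · have hfloor : ⌊(t : ℝ)⌋ = 0 := Int.floor_eq_zero_iff.2 ⟨t.2.1, ht⟩
    have hfract : fractPoint t = t := Subtype.ext (Int.fract_eq_self.2 ⟨t.2.1, ht⟩)
    rw [twistedExtension, hfloor, hfract, zpow_zero, hone]
  · obtain rfl : t = 1 := Subtype.ext ht
    have hfract : fractPoint (1 : unitInterval) = 0 := Subtype.ext Int.fract_one
    rw [twistedExtension, hfract, Set.Icc.coe_one, Int.floor_one, zpow_one, hγ]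

theorem twistedExtension_eqOn_Icc (hone : ∀ x, act x 1 = x)
    (hmul : ∀ x g h, act (act x g) h = act x (g * h)) {γ : unitInterval → M}
    (hγ : act (γ 0) k = γ 1) (n : ℤ) :
    EqOn (twistedExtension act k γ) (fun x => act (γ (projIcc 0 1 zero_le_one (x - n))) (k ^ n))
      (Icc n (n + 1)) := by
  intro x hx
  have hmem : x - n ∈ Icc (0 : ℝ) 1 := ⟨by linarith [hx.1], by linarith [hx.2]⟩
  calc twistedExtension act k γ x = twistedExtension act k γ ((x - n : ℝ) + n) := by
        rw [sub_add_cancel]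
    _ = act (γ (projIcc 0 1 zero_le_one (x - n))) (k ^ n) := by
        rw [twistedExtension_add_intCast k hmul, projIcc_of_mem _ hmem,
          ← twistedExtension_coe k hone hγ ⟨x - n, hmem⟩]

theorem continuous_twistedExtension [TopologicalSpace M]
    (hcont : ∀ g : G, Continuous fun x => act x g) (hone : ∀ x, act x 1 = x)
    (hmul : ∀ x g h, act (act x g) h = act x (g * h)) (γ : C(unitInterval, M))
    (hγ : act (γ 0) k = γ 1) :
    Continuous (twistedExtension act k γ) := by
  have hIcc : LocallyFinite fun n : ℤ => Icc (n : ℝ) (n + 1) :=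
    locallyFinite_Icc_of_tendsto tendsto_intCast_atTop_atTop
      (tendsto_atBot_add_const_right _ _ (tendsto_intCast_atBot_iff.2 tendsto_id))
  refine hIcc.continuous (iUnion_Icc_intCast ℝ) (fun _ => isClosed_Icc) fun n => ?_
  refine ContinuousOn.congr ?_ (twistedExtension_eqOn_Icc k hone hmul hγ n)
  exact ((hcont _).comp (γ.continuous.comp
    (continuous_projIcc.comp (continuous_sub_right _)))).continuousOn

theorem rotFn_rotFn (hmul : ∀ x g h, act (act x g) h = act x (g * h)) (s s' : ℝ)
    (γ : unitInterval → M) :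
    rotFn act k s (rotFn act k s' γ) = rotFn act k (s + s') γ := by
  funext t
  calc rotFn act k s (rotFn act k s' γ) t
      = twistedExtension act k γ (Int.fract ((t : ℝ) + s) + s' + ⌊(t : ℝ) + s⌋) :=
        (twistedExtension_add_intCast k hmul γ _ _).symm
    _ = rotFn act k (s + s') γ t := by
        rw [rotFn_apply, Int.fract]
        ring_nf

end TwistedExtension

/-- Let G be a group acting continuously on the right on a topological space M,
and k ∈ G.  For γ ∈ P_k(M) and s ∈ ℝ define (s·γ)(t) := γ(t + s − ⌊t + s⌋)·k^⌊t+s⌋.  Then: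
(i) s·γ is a continuous path lying again in P_k(M); (ii) 0·γ = γ and s·(s'·γ) = (s+s')·γ, so
this defines an action of the additive group ℝ on P_k(M); and (iii) (1·γ)(t) = γ(t)·k for all
t, i.e. 1·γ is the pointwise translate γ_k of γ by k. -/
theorem real_action_on_twisted_paths
    {M G : Type*} [TopologicalSpace M] [Group G]
    (act : M → G → M)
    (hcont : ∀ g : G, Continuous fun x => act x g)
    (hone : ∀ x, act x 1 = x)
    (hmul : ∀ x g h, act (act x g) h = act x (g * h))
    (k : G) :
    -- (i) s·γ is a continuous path lying again in P_k(M)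
    (∀ (γ : PSp act k) (s : ℝ),
      Continuous (rotFn act k s ⇑γ.1) ∧
      act (rotFn act k s ⇑γ.1 0) k = rotFn act k s ⇑γ.1 1) ∧
    -- (ii) 0·γ = γ and s·(s'·γ) = (s+s')·γ
    (∀ γ : PSp act k, rotFn act k 0 ⇑γ.1 = ⇑γ.1) ∧
    (∀ (γ : PSp act k) (s s' : ℝ),
      rotFn act k s (rotFn act k s' ⇑γ.1) = rotFn act k (s + s') ⇑γ.1) ∧
    -- (iii) (1·γ)(t) = γ(t)·k
    (∀ (γ : PSp act k) (t : unitInterval), rotFn act k 1 ⇑γ.1 t = act (γ.1 t) k) := by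
  refine ⟨fun γ s => ⟨?_, ?_⟩, fun γ => ?_, fun γ s s' => rotFn_rotFn k hmul s s' γ.1,
    fun γ t => ?_⟩
  · exact (continuous_twistedExtension k hcont hone hmul γ.1 γ.2).comp
      (continuous_subtype_val.add continuous_const)
  · rw [rotFn_apply, rotFn_apply, Set.Icc.coe_zero, Set.Icc.coe_one, zero_add, add_comm,
      twistedExtension_add_one k hmul]
  · funext t
    rw [rotFn_apply, add_zero, twistedExtension_coe k hone γ.2]
  · rw [rotFn_apply, twistedExtension_add_one k hmul, twistedExtension_coe k hone γ.2]
end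

section
/- Let G be a group and let α : G × G → ℂˣ be a normalized 2-cocycle, i.e., α(g,h)·α(gh,k) = α(g,hk)·α(h,k) for all g, h, k ∈ G and α(g,1) = α(1,g) = 1 for all g ∈ G. Define τ : G × G → ℂˣ by τ(g,h) = α(g,h)/α(h, h⁻¹gh). Then τ is a 1-cocycle on the inertia groupoid of G: for all g, h, k ∈ G, τ(g, hk) = τ(g, h)·τ(h⁻¹gh, k). -/
/-- Let G be a group and α : G × G → ℂˣ a normalized 2-cocycle.  Define
τ(g,h) = α(g,h)/α(h, h⁻¹gh).  Then τ is a 1-cocycle on the inertia groupoid of G: for all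
g, h, k ∈ G, τ(g, hk) = τ(g, h)·τ(h⁻¹gh, k). -/
theorem discrete_torsion_is_inertia_one_cocycle
    {G : Type*} [Group G] (α : G → G → ℂˣ)
    (hcoc : ∀ g h k : G, α g h * α (g * h) k = α g (h * k) * α h k)
    (hnorm₁ : ∀ g : G, α g 1 = 1)
    (hnorm₂ : ∀ g : G, α 1 g = 1) :
    ∀ g h k : G,
      α g (h * k) / α (h * k) ((h * k)⁻¹ * g * (h * k)) =
        (α g h / α h (h⁻¹ * g * h)) *
          (α (h⁻¹ * g * h) k / α k (k⁻¹ * (h⁻¹ * g * h) * k)) := by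
  intro g h k
  have e1 : (h * k)⁻¹ * g * (h * k) = k⁻¹ * (h⁻¹ * g * h) * k := by group
  have e2 : h * (h⁻¹ * g * h) = g * h := by group
  have e3 : k * (k⁻¹ * (h⁻¹ * g * h) * k) = h⁻¹ * g * h * k := by group
  have h1 := hcoc g h k
  have h2 := hcoc h (h⁻¹ * g * h) k
  have h3 := hcoc h k (k⁻¹ * (h⁻¹ * g * h) * k)
  rw [e2] at h2
  rw [e3] at h3
  rw [e1, div_mul_div_comm, div_eq_div_iff_mul_eq_mul]
  apply mul_left_cancel (a := α h k)
  calc α h k * (α g (h * k) * (α h (h⁻¹ * g * h) * α k (k⁻¹ * (h⁻¹ * g * h) * k)))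
      = (α g (h * k) * α h k) * (α h (h⁻¹ * g * h) * α k (k⁻¹ * (h⁻¹ * g * h) * k)) := by
        ac_rfl
    _ = (α g h * α (g * h) k) * (α h (h⁻¹ * g * h) * α k (k⁻¹ * (h⁻¹ * g * h) * k)) := by
        rw [h1]
    _ = α g h * ((α h (h⁻¹ * g * h) * α (g * h) k) * α k (k⁻¹ * (h⁻¹ * g * h) * k)) := by
        ac_rfl
    _ = α g h * ((α h (h⁻¹ * g * h * k) * α (h⁻¹ * g * h) k) * α k (k⁻¹ * (h⁻¹ * g * h) * k)) := by
        rw [h2]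
    _ = α g h * (α (h⁻¹ * g * h) k * (α h (h⁻¹ * g * h * k) * α k (k⁻¹ * (h⁻¹ * g * h) * k))) := by
        ac_rfl
    _ = α g h * (α (h⁻¹ * g * h) k * (α h k * α (h * k) (k⁻¹ * (h⁻¹ * g * h) * k))) := by
        rw [h3]
    _ = α h k * (α g h * α (h⁻¹ * g * h) k * α (h * k) (k⁻¹ * (h⁻¹ * g * h) * k)) := by
        ac_rfl
end

section
/- Let G be a group and let α : G × G → ℂˣ be a normalized 2-cocycle, i.e., α(g,h)·α(gh,k) = α(g,hk)·α(h,k) for all g, h, k ∈ G and α(g,1) = α(1,g) = 1 for all g ∈ G. Define τ(g,h) = α(g,h)/α(h, h⁻¹gh). Then for every fixed g ∈ G, the map h ↦ τ(g,h) restricted to the centralizer C(g) = {h ∈ G : gh = hg} is a group homomorphism C(g) → ℂˣ (a one-dimensional representation of C(g)). -/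
/-- Let G be a group and α : G × G → ℂˣ a normalized 2-cocycle, and put
τ(g,h) = α(g,h)/α(h, h⁻¹gh).  Then for every fixed g ∈ G, the map h ↦ τ(g,h) restricted to the
centralizer C(g) = {h ∈ G : gh = hg} is a group homomorphism C(g) → ℂˣ (a one-dimensional
representation of C(g)). -/
theorem discrete_torsion_restricts_to_character_of_centralizer
    {G : Type*} [Group G] (α : G → G → ℂˣ)
    (hcoc : ∀ g h k : G, α g h * α (g * h) k = α g (h * k) * α h k)
    (hnorm₁ : ∀ g : G, α g 1 = 1)
    (hnorm₂ : ∀ g : G, α 1 g = 1)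
    (g : G) :
    ∃ ρ : ↥(Subgroup.centralizer {g}) →* ℂˣ,
      ∀ h : ↥(Subgroup.centralizer {g}),
        ρ h = α g (h : G) / α (h : G) ((h : G)⁻¹ * g * (h : G)) := by
  have hcomm : ∀ h : ↥(Subgroup.centralizer {g}), g * (h : G) = (h : G) * g := by
    intro h
    exact h.2 g rfl
  have hfix : ∀ h : ↥(Subgroup.centralizer {g}), (h : G)⁻¹ * g * (h : G) = g := by
    intro h
    rw [show (h : G)⁻¹ * g * (h : G) = (h : G)⁻¹ * (g * (h : G)) by group, hcomm h]
    group
  refine ⟨{ toFun := fun h => α g (h : G) / α (h : G) g, map_one' := ?_, map_mul' := ?_ }, ?_⟩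
  · simp [hnorm₁, hnorm₂]
  · intro h k
    simp only [Subgroup.coe_mul]
    have e1 := hcoc g (h : G) (k : G)
    have e2 := hcoc (h : G) g (k : G)
    have e3 := hcoc (h : G) (k : G) g
    rw [← hcomm h] at e2
    rw [show (k : G) * g = g * (k : G) from (hcomm k).symm] at e3
    have E1 : (α g (h : G) : ℂ) * α (g * (h : G)) (k : G)
        = α g ((h : G) * (k : G)) * α (h : G) (k : G) := by exact_mod_cast congrArg Units.val e1
    have E2 : (α (h : G) g : ℂ) * α (g * (h : G)) (k : G)
        = α (h : G) (g * (k : G)) * α g (k : G) := by exact_mod_cast congrArg Units.val e2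
    have E3 : (α (h : G) (k : G) : ℂ) * α ((h : G) * (k : G)) g
        = α (h : G) (g * (k : G)) * α (k : G) g := by exact_mod_cast congrArg Units.val e3
    rw [div_mul_div_comm, div_eq_div_iff_mul_eq_mul]
    have hne : (α (h : G) (k : G) : ℂ) ≠ 0 := Units.ne_zero _
    rw [Units.ext_iff]
    push_cast
    apply mul_left_cancel₀ hne
    linear_combination (-(α (h : G) g * α (k : G) g : ℂ)) * E1
      + ((α g (h : G) : ℂ) * α (k : G) g) * E2 + (-(α g (h : G) * α g (k : G) : ℂ)) * E3
  · intro h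
    simp [hfix h]
end
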